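/- arXiv:2506.05951 — 2 statements merged into one kernel-verified Lean document; each statement's English description precedes it below -/
import Mathlib

section
/- Let T be an operator mapping sets to sets that is monotone (E ⊆ F implies TE ⊆ TF) and translation invariant (T(E+z) = TE + z for all z ∈ ℝ^N). Define the induced operator on functions by (Tu)(x) = sup{s ∈ ℝ : x ∈ T{u ≥ s}}. If u is uniformly continuous with modulus of continuity ω, then Tu is uniformly continuous with the same modulus ω. -/
/-!
A translate of the superlevel set `{u ≥ s}` by `z` lies in `{u ≥ s - ω ‖z‖}`. Monotonicity and
translation invariance of `T` carry this inclusion over to `T {u ≥ s}`, so every level `s` reached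
by `Tu` at `x` is reached, up to the loss `ω (dist x y)`, at `y`; taking suprema gives
`Tu x ≤ Tu y + ω (dist x y)`, and symmetry gives the claim.
-/

open Set

section LevelSetOperator

variable {E : Type*} [SeminormedAddGroup E]

lemma image_add_superlevel_subset {u : E → ℝ} {ω : ℝ → ℝ}
    (hu : ∀ x y, |u x - u y| ≤ ω (dist x y)) (s : ℝ) (z : E) :
    (· + z) '' {p | s ≤ u p} ⊆ {p | s - ω ‖z‖ ≤ u p} := by
  rintro _ ⟨p, hp, rfl⟩
  have hdist : |u (p + z) - u p| ≤ ω ‖z‖ := by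
    simpa only [dist_self_add_left] using hu (p + z) p
  simp only [mem_ofPred_eq] at hp ⊢
  linarith [(abs_le.mp hdist).1]

lemma mem_superlevel_operator_of_mem {T : Set E → Set E}
    (hmono : ∀ A B, A ⊆ B → T A ⊆ T B)
    (htrans : ∀ (A : Set E) (z : E), T ((· + z) '' A) = (· + z) '' (T A))
    {u : E → ℝ} {ω : ℝ → ℝ} (hu : ∀ x y, |u x - u y| ≤ ω (dist x y))
    {s : ℝ} {x : E} (hx : x ∈ T {p | s ≤ u p}) (y : E) :
    y ∈ T {p | s - ω (dist x y) ≤ u p} := by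
  have hy : y ∈ T ((· + (-x + y)) '' {p | s ≤ u p}) := by
    rw [htrans]
    exact ⟨x, hx, add_neg_cancel_left x y⟩
  have hdist : ‖-x + y‖ = dist x y := by
    rw [← dist_self_add_right (-x + y) x, add_neg_cancel_left]
  rw [← hdist]
  exact hmono _ _ (image_add_superlevel_subset hu s (-x + y)) hy

end LevelSetOperator

lemma csSup_le_csSup_add {A B : Set ℝ} {c : ℝ} (hA : A.Nonempty) (hB : BddAbove B)
    (hAB : ∀ s ∈ A, s - c ∈ B) : sSup A ≤ sSup B + c :=
  csSup_le hA fun s hs => by linarith [le_csSup hB (hAB s hs)]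

theorem stmt_10_general (N : ℕ)
    (T : Set (EuclideanSpace ℝ (Fin N)) → Set (EuclideanSpace ℝ (Fin N)))
    (hmono : ∀ E F, E ⊆ F → T E ⊆ T F)
    (htrans : ∀ (E : Set (EuclideanSpace ℝ (Fin N))) (z : EuclideanSpace ℝ (Fin N)),
      T ((· + z) '' E) = (· + z) '' (T E))
    (u : EuclideanSpace ℝ (Fin N) → ℝ)
    (ω : ℝ → ℝ)
    (hu : ∀ x y, |u x - u y| ≤ ω (dist x y))
    (hne : ∀ x, {s : ℝ | x ∈ T {y | s ≤ u y}}.Nonempty)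
    (hbdd : ∀ x, BddAbove {s : ℝ | x ∈ T {y | s ≤ u y}})
    (Tu : EuclideanSpace ℝ (Fin N) → ℝ)
    (hTu : ∀ x, Tu x = sSup {s : ℝ | x ∈ T {y | s ≤ u y}}) :
    ∀ x y, |Tu x - Tu y| ≤ ω (dist x y) := by
  have hle : ∀ x y, Tu x ≤ Tu y + ω (dist x y) := fun x y => by
    rw [hTu x, hTu y]
    exact csSup_le_csSup_add (hne x) (hbdd y)
      fun _ hs => mem_superlevel_operator_of_mem hmono htrans hu hs y
  intro x y
  rw [abs_sub_le_iff]
  constructor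
  · linarith [hle x y]
  · linarith [dist_comm y x ▸ hle y x]

/-- If T is a monotone, translation-invariant set operator and
(Tu)(x) = sup{s : x ∈ T{u ≥ s}}, then Tu has the same modulus of continuity ω as u. -/
theorem stmt_10 (N : ℕ)
    (T : Set (EuclideanSpace ℝ (Fin N)) → Set (EuclideanSpace ℝ (Fin N)))
    (hmono : ∀ E F, E ⊆ F → T E ⊆ T F)
    (htrans : ∀ (E : Set (EuclideanSpace ℝ (Fin N))) (z : EuclideanSpace ℝ (Fin N)),
      T ((· + z) '' E) = (· + z) '' (T E))
    (u : EuclideanSpace ℝ (Fin N) → ℝ)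
    (ω : ℝ → ℝ) (hωc : Continuous ω) (hωm : StrictMono ω) (hω0 : ω 0 = 0)
    (hu : ∀ x y, |u x - u y| ≤ ω (dist x y))
    (hne : ∀ x, {s : ℝ | x ∈ T {y | s ≤ u y}}.Nonempty)
    (hbdd : ∀ x, BddAbove {s : ℝ | x ∈ T {y | s ≤ u y}})
    (Tu : EuclideanSpace ℝ (Fin N) → ℝ)
    (hTu : ∀ x, Tu x = sSup {s : ℝ | x ∈ T {y | s ≤ u y}}) :
    ∀ x y, |Tu x - Tu y| ≤ ω (dist x y) :=
  stmt_10_general N T hmono htrans u ω hu hne hbdd Tu hTu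
end

section
/- Let (E_n) be a non-decreasing sequence of measurable sets in ℝ^N contained in a fixed ball B_R, with E_n ↑ E' := ∪_n E_n in L¹, let J be lower semicontinuous with respect to L¹_loc convergence, and let (g_n) be measurable functions with |g_n| ≤ |g̃| and g_n → g̃ pointwise, where g̃ is measurable, nonnegative outside a fixed set and nonpositive inside. If each E_n minimizes F ↦ J(F) + ∫_{E△F}|g_n| − c|F| (over all measurable F, for fixed E and constant c), then E' minimizes F ↦ J(F) + ∫_{E△F}|g̃| − c|F|, provided ∫_{E△E₀}|g̃| < ∞ for some minimizer E₀ of the limit functional containing all the E_n. -/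
/-!
Along `E_n ↑ E'` the functionals `Φ_n(E_n) = J(E_n) + ∫_{E△E_n}|g_n| - c|E_n|` are lower
semicontinuous in the limit: `J` by hypothesis (the convergence is even in measure, since
`|E' \ E_n| → 0`), the integral term by Fatou's lemma (indicators of `E△E_n` converge
pointwise to that of `E△E'`), and the volume term is continuous because `E'` lies in a ball.
Hence `Φ(E') ≤ liminf Φ_n(E_n)`. Testing the minimality of `E_n` against `E₀` and using
`|g_n| ≤ |g̃|` gives `Φ_n(E_n) ≤ Φ_n(E₀) ≤ Φ(E₀)`, and `E₀` minimizes `Φ`.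
-/

open MeasureTheory Filter Topology Set
open scoped ENNReal symmDiff

namespace EReal

lemma coe_ennreal_liminf {ι : Type*} {l : Filter ι} [l.NeBot] (u : ι → ℝ≥0∞) :
    ((liminf u l : ℝ≥0∞) : EReal) = liminf (fun i => (u i : EReal)) l :=
  coe_ennreal_strictMono.monotone.map_liminf_of_continuousAt u
    continuous_coe_ennreal_ereal.continuousAt

lemma coe_mul_coe_ennreal (c : ℝ) {x : ℝ≥0∞} (hx : x ≠ ∞) :
    (c : EReal) * (x : EReal) = ((c * x.toReal : ℝ) : EReal) := by
  rw [coe_mul, coe_ennreal_toReal hx]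

lemma coe_ennreal_add_sub_le_liminf {ι : Type*} {l : Filter ι} [l.NeBot]
    {a b : ℝ≥0∞} {w : ℝ} {u v : ι → ℝ≥0∞} {z : ι → ℝ}
    (ha : a ≤ liminf u l) (hb : b ≤ liminf v l) (hz : Tendsto z l (𝓝 w)) :
    (a : EReal) + b - w ≤ liminf (fun i => (u i : EReal) + v i - z i) l := by
  have hneg : Tendsto (fun i => ((-z i : ℝ) : EReal)) l (𝓝 ((-w : ℝ) : EReal)) :=
    (continuous_coe_real_ereal.tendsto _).comp hz.neg
  simp only [sub_eq_add_neg, ← coe_neg]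
  calc (a : EReal) + b + ((-w : ℝ) : EReal)
      ≤ liminf (fun i => (u i : EReal)) l + liminf (fun i => (v i : EReal)) l +
          liminf (fun i => ((-z i : ℝ) : EReal)) l := by
        rw [← coe_ennreal_liminf, ← coe_ennreal_liminf, hneg.liminf_eq]
        gcongr <;> exact coe_ennreal_le_coe_ennreal_iff.2 ‹_›
    _ ≤ liminf (fun i => (u i : EReal) + v i + ((-z i : ℝ) : EReal)) l :=
        (add_le_add_left le_liminf_add _).trans le_liminf_add

end EReal

section SetConvergence

variable {α ι : Type*}

lemma Monotone.eventually_mem_iff_mem_iUnion [Preorder ι] {s : ι → Set α} (hs : Monotone s)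
    (x : α) : ∀ᶠ i in atTop, (x ∈ s i ↔ x ∈ ⋃ i, s i) := by
  by_cases hx : x ∈ ⋃ i, s i
  · obtain ⟨i, hi⟩ := mem_iUnion.1 hx
    exact (eventually_ge_atTop i).mono fun j hij => iff_of_true (hs hij hi) hx
  · exact .of_forall fun i => iff_of_false (fun h => hx (mem_iUnion_of_mem i h)) hx

variable [MeasurableSpace α] {μ : Measure α}

lemma tendsto_measure_symmDiff_iUnion {s : ℕ → Set α} (hs : Monotone s)
    (hm : ∀ n, NullMeasurableSet (s n) μ) (hfin : μ (⋃ n, s n) ≠ ∞) :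
    Tendsto (fun n => μ (s n ∆ ⋃ n, s n)) atTop (𝓝 0) := by
  have h := tendsto_measure_iInter_atTop (μ := μ) (s := fun n => (⋃ n, s n) \ s n)
    (fun n => (NullMeasurableSet.iUnion hm).diff (hm n))
    (fun m n hmn => sdiff_subset_sdiff_right (hs hmn))
    ⟨0, measure_ne_top_of_subset sdiff_subset hfin⟩
  rw [← sdiff_iUnion, sdiff_self, measure_empty] at h
  simpa only [symmDiff_of_le (subset_iUnion s _), Function.comp_def] using h

lemma lintegral_le_liminf_setLIntegral_of_eventually_mem_iff {s : ℕ → Set α} {t : Set α}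
    {f : ℕ → α → ℝ≥0∞} {g : α → ℝ≥0∞} (hs : ∀ n, MeasurableSet (s n)) (ht : MeasurableSet t)
    (hf : ∀ n, Measurable (f n)) (hst : ∀ x, ∀ᶠ n in atTop, (x ∈ s n ↔ x ∈ t))
    (hfg : ∀ x, Tendsto (fun n => f n x) atTop (𝓝 (g x))) :
    ∫⁻ x in t, g x ∂μ ≤ liminf (fun n => ∫⁻ x in s n, f n x ∂μ) atTop := by
  have hlim : ∀ x, Tendsto (fun n => (s n).indicator (f n) x) atTop (𝓝 (t.indicator g x)) := by
    intro x
    by_cases hx : x ∈ t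
    · rw [indicator_of_mem hx]
      exact (hfg x).congr' ((hst x).mono fun n hn => (indicator_of_mem (hn.2 hx) _).symm)
    · rw [indicator_of_notMem hx]
      exact tendsto_const_nhds.congr'
        ((hst x).mono fun n hn => (indicator_of_notMem (mt hn.1 hx) _).symm)
  calc ∫⁻ x in t, g x ∂μ = ∫⁻ x, t.indicator g x ∂μ := (lintegral_indicator ht _).symm
    _ = ∫⁻ x, liminf (fun n => (s n).indicator (f n) x) atTop ∂μ :=
        lintegral_congr fun x => (hlim x).liminf_eq.symm
    _ ≤ liminf (fun n => ∫⁻ x, (s n).indicator (f n) x ∂μ) atTop :=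
        lintegral_liminf_le fun n => (hf n).indicator (hs n)
    _ = liminf (fun n => ∫⁻ x in s n, f n x ∂μ) atTop := by
        simp only [lintegral_indicator (hs _)]

end SetConvergence

theorem stmt_18_general (N : ℕ) (R : ℝ)
    (J : Set (EuclideanSpace ℝ (Fin N)) → ENNReal)
    (hlsc : ∀ (F : ℕ → Set (EuclideanSpace ℝ (Fin N))) (G : Set (EuclideanSpace ℝ (Fin N))),
      (∀ K : Set (EuclideanSpace ℝ (Fin N)), IsCompact K →
        Filter.Tendsto (fun n => volume (symmDiff (F n) G ∩ K)) Filter.atTop (nhds 0)) →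
      J G ≤ Filter.liminf (fun n => J (F n)) Filter.atTop)
    (E : Set (EuclideanSpace ℝ (Fin N))) (hEm : MeasurableSet E) (c : ℝ)
    (gt : EuclideanSpace ℝ (Fin N) → ℝ)
    (gn : ℕ → EuclideanSpace ℝ (Fin N) → ℝ) (hgnm : ∀ n, Measurable (gn n))
    (hdom : ∀ n x, |gn n x| ≤ |gt x|)
    (hptw : ∀ x, Filter.Tendsto (fun n => gn n x) Filter.atTop (nhds (gt x)))
    (Φ : (EuclideanSpace ℝ (Fin N) → ℝ) → Set (EuclideanSpace ℝ (Fin N)) → EReal)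
    (hΦ : ∀ gi F, Φ gi F = (J F : EReal) +
      ((∫⁻ x in symmDiff E F, ENNReal.ofReal |gi x| : ENNReal) : EReal) -
      (c : EReal) * ((volume F : ENNReal) : EReal))
    (En : ℕ → Set (EuclideanSpace ℝ (Fin N))) (hEnm : ∀ n, MeasurableSet (En n))
    (hEnmono : Monotone En)
    (hEnball : ∀ n, En n ⊆ Metric.ball (0 : EuclideanSpace ℝ (Fin N)) R)
    (hEnmin : ∀ n, ∀ F, MeasurableSet F → Φ (gn n) (En n) ≤ Φ (gn n) F)
    (E' : Set (EuclideanSpace ℝ (Fin N))) (hE' : E' = ⋃ n, En n)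
    (E₀ : Set (EuclideanSpace ℝ (Fin N))) (hE₀m : MeasurableSet E₀)
    (hE₀min : ∀ F, MeasurableSet F → Φ gt E₀ ≤ Φ gt F) :
    ∀ F, MeasurableSet F → Φ gt E' ≤ Φ gt F := by
  subst hE'
  intro F hF
  have hfin : ∀ n, volume (En n) ≠ ∞ := fun n =>
    measure_ne_top_of_subset (hEnball n) measure_ball_lt_top.ne
  have hfin' : volume (⋃ n, En n) ≠ ∞ :=
    measure_ne_top_of_subset (iUnion_subset hEnball) measure_ball_lt_top.ne
  have hJ : J (⋃ n, En n) ≤ liminf (fun n => J (En n)) atTop :=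
    hlsc En _ fun K _ => tendsto_of_tendsto_of_tendsto_of_le_of_le tendsto_const_nhds
      (tendsto_measure_symmDiff_iUnion hEnmono (fun n => (hEnm n).nullMeasurableSet) hfin')
      (fun _ => bot_le) fun _ => measure_mono inter_subset_left
  have hFatou : ∫⁻ x in E ∆ ⋃ n, En n, ENNReal.ofReal |gt x| ≤
      liminf (fun n => ∫⁻ x in E ∆ En n, ENNReal.ofReal |gn n x|) atTop :=
    lintegral_le_liminf_setLIntegral_of_eventually_mem_iff (fun n => hEm.symmDiff (hEnm n))
      (hEm.symmDiff (.iUnion hEnm)) (fun n => (hgnm n).abs.ennreal_ofReal)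
      (fun x => (hEnmono.eventually_mem_iff_mem_iUnion x).mono fun n hn => by
        simp only [mem_symmDiff, hn])
      fun x => (ENNReal.continuous_ofReal.tendsto _).comp (hptw x).abs
  have hvol : Tendsto (fun n => c * (volume (En n)).toReal) atTop
      (𝓝 (c * (volume (⋃ n, En n)).toReal)) :=
    ((ENNReal.tendsto_toReal hfin').comp (tendsto_measure_iUnion_atTop hEnmono)).const_mul c
  have hlower : Φ gt (⋃ n, En n) ≤ liminf (fun n => Φ (gn n) (En n)) atTop := by
    simp only [hΦ, EReal.coe_mul_coe_ennreal c (hfin _), EReal.coe_mul_coe_ennreal c hfin']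
    exact EReal.coe_ennreal_add_sub_le_liminf hJ hFatou hvol
  have hupper : ∀ n, Φ (gn n) (En n) ≤ Φ gt E₀ := fun n => (hEnmin n E₀ hE₀m).trans <| by
    rw [hΦ, hΦ]
    refine EReal.sub_le_sub (add_le_add_right ?_ _) le_rfl
    exact EReal.coe_ennreal_le_coe_ennreal_iff.2
      (lintegral_mono fun x => ENNReal.ofReal_le_ofReal (hdom n x))
  calc Φ gt (⋃ n, En n) ≤ liminf (fun n => Φ (gn n) (En n)) atTop := hlower
    _ ≤ Φ gt E₀ := liminf_le_of_frequently_le' (.of_forall hupper)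
    _ ≤ Φ gt F := hE₀min F hF

/-- Stability of minimizers for the truncated functionals: if
E_n ↑ E' ⊆ B_R, each E_n minimizes F ↦ J(F) + ∫_{E△F}|g_n| − c|F| with |g_n| ≤ |g̃|,
g_n → g̃ pointwise, g̃ ≥ 0 off E and ≤ 0 on E, J is L¹_loc-lower semicontinuous, and
some minimizer E₀ of the limit functional contains all E_n with ∫_{E△E₀}|g̃| < ∞,
then E' minimizes F ↦ J(F) + ∫_{E△F}|g̃| − c|F|. -/
theorem stmt_18 (N : ℕ) (R : ℝ) (hR : 0 < R)
    (J : Set (EuclideanSpace ℝ (Fin N)) → ENNReal)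
    (hlsc : ∀ (F : ℕ → Set (EuclideanSpace ℝ (Fin N))) (G : Set (EuclideanSpace ℝ (Fin N))),
      (∀ K : Set (EuclideanSpace ℝ (Fin N)), IsCompact K →
        Filter.Tendsto (fun n => volume (symmDiff (F n) G ∩ K)) Filter.atTop (nhds 0)) →
      J G ≤ Filter.liminf (fun n => J (F n)) Filter.atTop)
    (E : Set (EuclideanSpace ℝ (Fin N))) (hEm : MeasurableSet E)
    (hEb : Bornology.IsBounded E) (c : ℝ)
    (gt : EuclideanSpace ℝ (Fin N) → ℝ) (hgtm : Measurable gt)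
    (hsign_in : ∀ x ∈ E, gt x ≤ 0) (hsign_out : ∀ x ∉ E, 0 ≤ gt x)
    (gn : ℕ → EuclideanSpace ℝ (Fin N) → ℝ) (hgnm : ∀ n, Measurable (gn n))
    (hdom : ∀ n x, |gn n x| ≤ |gt x|)
    (hptw : ∀ x, Filter.Tendsto (fun n => gn n x) Filter.atTop (nhds (gt x)))
    (Φ : (EuclideanSpace ℝ (Fin N) → ℝ) → Set (EuclideanSpace ℝ (Fin N)) → EReal)
    (hΦ : ∀ gi F, Φ gi F = (J F : EReal) +
      ((∫⁻ x in symmDiff E F, ENNReal.ofReal |gi x| : ENNReal) : EReal) -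
      (c : EReal) * ((volume F : ENNReal) : EReal))
    (En : ℕ → Set (EuclideanSpace ℝ (Fin N))) (hEnm : ∀ n, MeasurableSet (En n))
    (hEnmono : Monotone En)
    (hEnball : ∀ n, En n ⊆ Metric.ball (0 : EuclideanSpace ℝ (Fin N)) R)
    (hEnmin : ∀ n, ∀ F, MeasurableSet F → Φ (gn n) (En n) ≤ Φ (gn n) F)
    (E' : Set (EuclideanSpace ℝ (Fin N))) (hE' : E' = ⋃ n, En n)
    (E₀ : Set (EuclideanSpace ℝ (Fin N))) (hE₀m : MeasurableSet E₀)
    (hE₀min : ∀ F, MeasurableSet F → Φ gt E₀ ≤ Φ gt F)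
    (hE₀sup : ∀ n, En n ⊆ E₀)
    (hE₀fin : (∫⁻ x in symmDiff E E₀, ENNReal.ofReal |gt x| : ENNReal) ≠ ⊤) :
    ∀ F, MeasurableSet F → Φ gt E' ≤ Φ gt F :=
  stmt_18_general N R J hlsc E hEm c gt gn hgnm hdom hptw Φ hΦ En hEnm hEnmono hEnball hEnmin E' hE'
    E₀ hE₀m hE₀min
end
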